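/- Let ρ > 0, κ > 0, c₁ > 0 and let f : (0,∞) → [0,∞) be locally integrable and satisfy f(t) ≤ c₁ + κ ∫₀ᵗ (t-s)^{ρ-1} f(s) ds for all t > 0. Then there exist positive constants c₂ and c₃ (depending only on ρ and c₁) such that f(t) ≤ c₂ exp(c₃ (Γ(ρ)κ)^{1/ρ} t) for all t > 0. -/

import Mathlib

/-!
With `μ = (2 Γ(ρ) κ)^(1/ρ)` the function `g t = 2 c₁ e^(μt)` is a supersolution: since
`∫₀ᵗ (t-s)^(ρ-1) e^(μs) ds ≤ Γ(ρ) μ^(-ρ) e^(μt)`, we get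
`c₁ + κ ∫₀ᵗ (t-s)^(ρ-1) g s ds ≤ c₁ + g t / 2 ≤ g t`.
If `f t > g t` for some `t`, the positive part `h` of `f - g`, cut off at `t`, is integrable and
satisfies the homogeneous inequality `h u ≤ κ ∫₀ᵘ (u-s)^(ρ-1) h s ds`. Measured in the weighted
norm `∫ e^(-μu) |h u| du` the right-hand side is at most half the left, so `h = 0` a.e., and the
inequality at `t` itself gives `f t ≤ g t`, a contradiction.
-/

open MeasureTheory Real Set
open scoped ENNReal

namespace MeasureTheory

theorem lintegral_lconvolution {G : Type*} [MeasurableSpace G] [AddGroup G] [MeasurableAdd₂ G]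
    [MeasurableNeg G] {μ : Measure G} [μ.IsAddLeftInvariant] [SFinite μ] {f g : G → ℝ≥0∞}
    (hf : AEMeasurable f μ) (hg : AEMeasurable g μ) :
    ∫⁻ x, (f ⋆ₗ[μ] g) x ∂μ = (∫⁻ x, f x ∂μ) * ∫⁻ x, g x ∂μ := by
  simp only [lconvolution_def]
  rw [lintegral_lintegral_swap (by fun_prop)]
  have hinner : ∀ y, ∫⁻ x, f y * g (-y + x) ∂μ = f y * ∫⁻ x, g x ∂μ := fun y => by
    rw [lintegral_const_mul'' _ (f := fun x => g (-y + x))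
      (hg.comp_quasiMeasurePreserving (measurePreserving_add_left μ (-y)).quasiMeasurePreserving),
      lintegral_add_left_eq_self]
  simp_rw [hinner]
  exact lintegral_mul_const'' _ hf

end MeasureTheory

namespace FractionalGronwall

-- The Riemann–Liouville integral of order `ρ`, without its factor `1 / Γ(ρ)`.
noncomputable def rlIntegral (ρ : ℝ) (f : ℝ → ℝ) (t : ℝ) : ℝ :=
  ∫ s in Ioo 0 t, (t - s) ^ (ρ - 1) * f s

noncomputable def dampedKernel (ρ μ x : ℝ) : ℝ≥0∞ :=
  (Ioi 0).indicator (fun y => ENNReal.ofReal (y ^ (ρ - 1) * exp (-(μ * y)))) x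

-- Chosen so that `κ ∫₀^∞ x^(ρ-1) e^(-μx) dx = κ Γ(ρ) / μ^ρ = 1/2`.
noncomputable def gronwallRate (ρ κ : ℝ) : ℝ := (2 * Gamma ρ * κ) ^ (1 / ρ)

variable {ρ : ℝ}

theorem rlIntegral_nonneg {f : ℝ → ℝ} {t : ℝ} (hf : ∀ s ∈ Ioo 0 t, 0 ≤ f s) :
    0 ≤ rlIntegral ρ f t :=
  setIntegral_nonneg measurableSet_Ioo fun s hs =>
    mul_nonneg (rpow_nonneg (sub_nonneg.2 hs.2.le) _) (hf s hs)

theorem integrableOn_rpow_kernel (hρ : 0 < ρ) (t : ℝ) :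
    IntegrableOn (fun s => (t - s) ^ (ρ - 1)) (Ioo 0 t) := by
  have h := (intervalIntegral.intervalIntegrable_rpow' (r := ρ - 1) (by linarith)
    (a := t) (b := 0)).comp_sub_left t
  simp only [sub_self, sub_zero] at h
  exact h.def'.mono_set (Ioo_subset_Ioc_self.trans Ioc_subset_uIoc)

-- A non-integrable integrand would make `rlIntegral ρ f t` the junk value `0`.
theorem integrableOn_of_le_add_mul_rlIntegral {κ c t : ℝ} {f : ℝ → ℝ}
    (hf : f t ≤ c + κ * rlIntegral ρ f t) (hlt : c < f t) :
    IntegrableOn (fun s => (t - s) ^ (ρ - 1) * f s) (Ioo 0 t) := by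
  by_contra hni
  rw [rlIntegral, integral_undef hni, mul_zero, add_zero] at hf
  exact hlt.not_ge hf

theorem integrableOn_Ioc_of_integrableOn_rpow_kernel_mul {f : ℝ → ℝ} {T : ℝ}
    (hloc : LocallyIntegrableOn f (Ioi 0)) (hT : 0 < T)
    (hK : IntegrableOn (fun s => (T - s) ^ (ρ - 1) * f s) (Ioo 0 T)) :
    IntegrableOn f (Ioc 0 T) := by
  have hnear0 : IntegrableOn f (Ioo 0 (T / 2)) := by
    have hcont : ContinuousOn (fun s => (T - s) ^ (1 - ρ)) (Icc 0 (T / 2)) := by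
      refine (continuousOn_const.sub continuousOn_id).rpow_const fun s hs => Or.inl ?_
      exact (show (0 : ℝ) < T - s by linarith [hs.2]).ne'
    have hK' := hK.mono_set (Ioo_subset_Ioo_right (by linarith : T / 2 ≤ T))
    refine (IntegrableOn.continuousOn_mul_of_subset hcont hK' isCompact_Icc measurableSet_Ioo
      Ioo_subset_Icc_self).congr_fun (fun s hs => ?_) measurableSet_Ioo
    dsimp only
    rw [← mul_assoc, ← rpow_add (by linarith [hs.2]), sub_add_sub_cancel, sub_self, rpow_zero,
      one_mul]
  have hnearT : IntegrableOn f (Icc (T / 2) T) :=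
    hloc.integrableOn_compact_subset (fun s hs => by simp only [mem_Ioi]; linarith [hs.1])
      isCompact_Icc
  exact (hnear0.union hnearT).mono_set Ioc_subset_Ioo_union_Icc

theorem measurable_dampedKernel (ρ μ : ℝ) : Measurable (dampedKernel ρ μ) :=
  (by fun_prop : Measurable fun x : ℝ => ENNReal.ofReal (x ^ (ρ - 1) * exp (-(μ * x)))).indicator
    measurableSet_Ioi

theorem lintegral_dampedKernel (hρ : 0 < ρ) {μ : ℝ} (hμ : 0 < μ) :
    ∫⁻ x, dampedKernel ρ μ x = ENNReal.ofReal ((1 / μ) ^ ρ * Gamma ρ) := by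
  rw [← integral_rpow_mul_exp_neg_mul_Ioi hρ hμ, ofReal_integral_eq_lintegral_ofReal]
  · exact lintegral_indicator measurableSet_Ioi _
  · exact (integrableOn_rpow_mul_exp_neg_mul_rpow (p := 1) (s := ρ - 1) (b := μ) (by linarith)
      one_pos hμ).congr_fun (fun x _ => by simp) measurableSet_Ioi
  · filter_upwards [self_mem_ae_restrict measurableSet_Ioi] with x hx
    exact mul_nonneg (rpow_nonneg hx.le _) (exp_pos _).le

theorem gronwallRate_pos (hρ : 0 < ρ) {κ : ℝ} (hκ : 0 < κ) : 0 < gronwallRate ρ κ := by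
  have := Gamma_pos_of_pos hρ
  unfold gronwallRate
  positivity

theorem mul_one_div_gronwallRate_rpow (hρ : 0 < ρ) {κ : ℝ} (hκ : 0 < κ) :
    κ * ((1 / gronwallRate ρ κ) ^ ρ * Gamma ρ) = 1 / 2 := by
  have := Gamma_pos_of_pos hρ
  rw [gronwallRate, one_div, inv_rpow (by positivity), one_div,
    rpow_inv_rpow (by positivity) hρ.ne']
  field_simp

theorem rlIntegral_const_mul_exp_le (hρ : 0 < ρ) {μ c : ℝ} (hμ : 0 < μ) (hc : 0 ≤ c) (t : ℝ) :
    rlIntegral ρ (fun s => c * exp (μ * s)) t ≤ c * exp (μ * t) * ((1 / μ) ^ ρ * Gamma ρ) := by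
  have hF : ∀ s ∈ Ioo 0 t, ENNReal.ofReal ((t - s) ^ (ρ - 1) * (c * exp (μ * s))) =
      ENNReal.ofReal (c * exp (μ * t)) * dampedKernel ρ μ (t - s) := by
    intro s hs
    rw [dampedKernel, indicator_of_mem (mem_Ioi.2 (sub_pos.2 hs.2)),
      ← ENNReal.ofReal_mul (by positivity), mul_mul_mul_comm, ← exp_add]
    ring_nf
  rw [rlIntegral, integral_eq_lintegral_of_nonneg_ae]
  · refine ENNReal.toReal_le_of_le_ofReal (by positivity) ?_
    calc ∫⁻ s in Ioo 0 t, ENNReal.ofReal ((t - s) ^ (ρ - 1) * (c * exp (μ * s)))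
        = ∫⁻ s in Ioo 0 t, ENNReal.ofReal (c * exp (μ * t)) * dampedKernel ρ μ (t - s) :=
          setLIntegral_congr_fun measurableSet_Ioo hF
      _ ≤ ∫⁻ s, ENNReal.ofReal (c * exp (μ * t)) * dampedKernel ρ μ (t - s) :=
          setLIntegral_le_lintegral _ _
      _ = ENNReal.ofReal (c * exp (μ * t) * ((1 / μ) ^ ρ * Gamma ρ)) := by
        rw [lintegral_const_mul _ (f := fun s => dampedKernel ρ μ (t - s))
            ((measurable_dampedKernel ρ μ).comp (measurable_const_sub t)),
          lintegral_sub_left_eq_self (dampedKernel ρ μ), lintegral_dampedKernel hρ hμ,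
          ← ENNReal.ofReal_mul (by positivity)]
  · filter_upwards [self_mem_ae_restrict measurableSet_Ioo] with s hs
    exact mul_nonneg (rpow_nonneg (sub_nonneg.2 hs.2.le) _) (by positivity)
  · have : Measurable fun s => (t - s) ^ (ρ - 1) * (c * exp (μ * s)) := by fun_prop
    exact this.aestronglyMeasurable

theorem add_mul_rlIntegral_two_mul_exp_le (hρ : 0 < ρ) {κ c t : ℝ} (hκ : 0 < κ) (hc : 0 ≤ c)
    (ht : 0 ≤ t) :
    c + κ * rlIntegral ρ (fun s => 2 * c * exp (gronwallRate ρ κ * s)) t ≤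
      2 * c * exp (gronwallRate ρ κ * t) := by
  set μ := gronwallRate ρ κ
  have hK := rlIntegral_const_mul_exp_le hρ (gronwallRate_pos hρ hκ) (by positivity : 0 ≤ 2 * c) t
  have hexp : 1 ≤ exp (μ * t) := one_le_exp (mul_nonneg (gronwallRate_pos hρ hκ).le ht)
  calc c + κ * rlIntegral ρ (fun s => 2 * c * exp (μ * s)) t
      ≤ c + κ * (2 * c * exp (μ * t) * ((1 / μ) ^ ρ * Gamma ρ)) := by gcongr
    _ = c + c * exp (μ * t) := by
      rw [mul_left_comm, mul_one_div_gronwallRate_rpow hρ hκ]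
      ring
    _ ≤ 2 * c * exp (μ * t) := by nlinarith

-- Bielecki's trick: for `G u = e^(-μu) H u` the inequality becomes `G ≤ κ (G ⋆ damped kernel)`,
-- and the damped kernel has mass `1 / (2κ)`, so `∫ G ≤ (∫ G) / 2`.
theorem ae_eq_zero_of_le_lintegral_rpow_kernel (hρ : 0 < ρ) {κ : ℝ} (hκ : 0 < κ)
    {H : ℝ → ℝ≥0∞} (hH : AEMeasurable H) (hsupp : ∀ s ≤ 0, H s = 0) (hfin : ∫⁻ s, H s ≠ ∞)
    (hle : ∀ u, H u ≤
      ENNReal.ofReal κ * ∫⁻ s in Ioo 0 u, ENNReal.ofReal ((u - s) ^ (ρ - 1)) * H s) :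
    H =ᵐ[volume] 0 := by
  set μ := gronwallRate ρ κ
  have hμ : 0 < μ := gronwallRate_pos hρ hκ
  set e : ℝ → ℝ≥0∞ := fun u => ENNReal.ofReal (exp (-(μ * u)))
  set G : ℝ → ℝ≥0∞ := fun u => e u * H u
  have hG : AEMeasurable G := by fun_prop
  have hGH : ∀ u, G u ≤ H u := by
    intro u
    rcases le_or_gt u 0 with hu | hu
    · simp [G, hsupp u hu]
    · exact mul_le_of_le_one_left' (ENNReal.ofReal_le_one.2 (exp_le_one_iff.2 (by nlinarith)))
  have hGle : ∀ u, G u ≤ ENNReal.ofReal κ * (G ⋆ₗ dampedKernel ρ μ) u := by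
    intro u
    calc G u ≤ e u * (ENNReal.ofReal κ *
          ∫⁻ s in Ioo 0 u, ENNReal.ofReal ((u - s) ^ (ρ - 1)) * H s) := mul_le_mul_right (hle u) _
      _ = ENNReal.ofReal κ * ∫⁻ s in Ioo 0 u, G s * dampedKernel ρ μ (-s + u) := by
        rw [mul_left_comm, ← lintegral_const_mul' _ _ ENNReal.ofReal_ne_top]
        congr 1
        refine setLIntegral_congr_fun measurableSet_Ioo fun s hs => ?_
        have hsu : 0 < -s + u := by linarith [hs.2]
        have he : ENNReal.ofReal (exp (-(μ * u))) =
            ENNReal.ofReal (exp (-(μ * s))) * ENNReal.ofReal (exp (-(μ * (-s + u)))) := by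
          rw [← ENNReal.ofReal_mul (exp_pos _).le, ← exp_add]
          ring_nf
        rw [dampedKernel, indicator_of_mem (mem_Ioi.2 hsu),
          ENNReal.ofReal_mul (rpow_nonneg hsu.le _), he, neg_add_eq_sub]
        simp only [G, e]
        ring
      _ ≤ ENNReal.ofReal κ * (G ⋆ₗ dampedKernel ρ μ) u := by
        gcongr
        exact setLIntegral_le_lintegral _ _
  have hhalf : ∫⁻ u, G u ≤ (∫⁻ u, G u) / 2 := calc
    ∫⁻ u, G u ≤ ∫⁻ u, ENNReal.ofReal κ * (G ⋆ₗ dampedKernel ρ μ) u := lintegral_mono hGle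
    _ = ENNReal.ofReal κ * ((∫⁻ u, G u) * ∫⁻ x, dampedKernel ρ μ x) := by
      rw [lintegral_const_mul' _ _ ENNReal.ofReal_ne_top,
        lintegral_lconvolution hG (measurable_dampedKernel ρ μ).aemeasurable]
    _ = (∫⁻ u, G u) / 2 := by
      rw [lintegral_dampedKernel hρ hμ, mul_left_comm, ← ENNReal.ofReal_mul hκ.le,
        mul_one_div_gronwallRate_rpow hρ hκ, one_div, ENNReal.ofReal_inv_of_pos two_pos,
        ENNReal.ofReal_ofNat, div_eq_mul_inv]
  have hG0 : ∫⁻ u, G u = 0 := by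
    by_contra h0
    exact (ENNReal.half_lt_self h0 (ne_top_of_le_ne_top hfin (lintegral_mono hGH))).not_ge hhalf
  filter_upwards [(lintegral_eq_zero_iff' hG).1 hG0] with u hu
  simp only [G, e, Pi.zero_apply, mul_eq_zero, ENNReal.ofReal_eq_zero] at hu
  exact hu.resolve_left (exp_pos _).not_ge

theorem ae_eq_zero_of_le_mul_rlIntegral (hρ : 0 < ρ) {κ : ℝ} (hκ : 0 < κ) {h : ℝ → ℝ} {T : ℝ}
    (h0 : ∀ s ∈ Ioc 0 T, 0 ≤ h s) (hint : IntegrableOn h (Ioc 0 T))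
    (hle : ∀ u ∈ Ioc 0 T, h u ≤ κ * rlIntegral ρ h u) :
    h =ᵐ[volume.restrict (Ioc 0 T)] 0 := by
  set H : ℝ → ℝ≥0∞ := (Ioc 0 T).indicator fun s => ENNReal.ofReal (h s)
  have hH : H =ᵐ[volume] 0 := by
    refine ae_eq_zero_of_le_lintegral_rpow_kernel hρ hκ ?_ ?_ ?_ fun u => ?_
    · exact (aemeasurable_indicator_iff measurableSet_Ioc).2 hint.aemeasurable.ennreal_ofReal
    · exact fun s hs => indicator_of_notMem (fun hmem => hs.not_gt hmem.1) _
    · rw [lintegral_indicator measurableSet_Ioc]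
      exact hint.lintegral_lt_top.ne
    by_cases hu : u ∈ Ioc 0 T
    · calc H u = ENNReal.ofReal (h u) := indicator_of_mem hu _
        _ ≤ ENNReal.ofReal κ * ENNReal.ofReal (rlIntegral ρ h u) := by
          rw [← ENNReal.ofReal_mul hκ.le]
          exact ENNReal.ofReal_le_ofReal (hle u hu)
        _ ≤ ENNReal.ofReal κ * ∫⁻ s in Ioo 0 u, ‖(u - s) ^ (ρ - 1) * h s‖ₑ :=
          mul_le_mul_right ((ofReal_le_enorm _).trans (enorm_integral_le_lintegral_enorm _)) _
        _ = ENNReal.ofReal κ * ∫⁻ s in Ioo 0 u, ENNReal.ofReal ((u - s) ^ (ρ - 1)) * H s := by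
          congr 1
          refine setLIntegral_congr_fun measurableSet_Ioo fun s hs => ?_
          have hsT : s ∈ Ioc 0 T := ⟨hs.1, hs.2.le.trans hu.2⟩
          rw [enorm_mul, enorm_of_nonneg (rpow_nonneg (sub_nonneg.2 hs.2.le) _),
            enorm_of_nonneg (h0 s hsT)]
          exact congrArg _ (indicator_of_mem hsT fun s => ENNReal.ofReal (h s)).symm
    · exact (indicator_of_notMem hu _).trans_le zero_le
  filter_upwards [ae_restrict_of_ae hH, self_mem_ae_restrict measurableSet_Ioc] with s hs hsT
  simp only [H, indicator_of_mem hsT, Pi.zero_apply, ENNReal.ofReal_eq_zero] at hs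
  exact le_antisymm hs (h0 s hsT)

theorem sub_le_mul_rlIntegral_max {κ c u : ℝ} {f g : ℝ → ℝ} (hκ : 0 ≤ κ)
    (hKf : IntegrableOn (fun s => (u - s) ^ (ρ - 1) * f s) (Ioo 0 u))
    (hKg : IntegrableOn (fun s => (u - s) ^ (ρ - 1) * g s) (Ioo 0 u))
    (hf : f u ≤ c + κ * rlIntegral ρ f u) (hg : c + κ * rlIntegral ρ g u ≤ g u) :
    f u - g u ≤ κ * rlIntegral ρ (fun s => max (f s - g s) 0) u := by
  have hsub : rlIntegral ρ f u - rlIntegral ρ g u ≤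
      rlIntegral ρ (fun s => max (f s - g s) 0) u := by
    rw [rlIntegral, rlIntegral, ← integral_sub hKf hKg]
    refine setIntegral_mono_on (hKf.sub hKg) ?_ measurableSet_Ioo fun s hs => ?_
    · refine IntegrableOn.congr_fun (hKf.sub hKg).pos_part (fun s hs => ?_) measurableSet_Ioo
      rw [Pi.sub_apply, ← mul_sub, mul_max_of_nonneg _ _ (rpow_nonneg (sub_nonneg.2 hs.2.le) _),
        mul_zero]
    · rw [← mul_sub]
      exact mul_le_mul_of_nonneg_left (le_max_left _ _) (rpow_nonneg (sub_nonneg.2 hs.2.le) _)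
  nlinarith [mul_le_mul_of_nonneg_left hsub hκ]

theorem le_of_le_add_mul_rlIntegral (hρ : 0 < ρ) {κ c : ℝ} (hκ : 0 < κ) {f g : ℝ → ℝ}
    (hloc : LocallyIntegrableOn f (Ioi 0)) (hg : Continuous g) (hg0 : ∀ s > 0, 0 ≤ g s)
    (hf : ∀ u > 0, f u ≤ c + κ * rlIntegral ρ f u)
    (hgsup : ∀ u > 0, c + κ * rlIntegral ρ g u ≤ g u) {t : ℝ} (ht : 0 < t) : f t ≤ g t := by
  have hKg : ∀ u, IntegrableOn (fun s => (u - s) ^ (ρ - 1) * g s) (Ioo 0 u) := fun u =>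
    (integrableOn_rpow_kernel hρ u).mul_continuousOn_of_subset hg.continuousOn measurableSet_Ioo
      isCompact_Icc Ioo_subset_Icc_self
  have hKf : ∀ u > 0, g u < f u → IntegrableOn (fun s => (u - s) ^ (ρ - 1) * f s) (Ioo 0 u) := by
    intro u hu hlt
    have hKg_nonneg : 0 ≤ κ * rlIntegral ρ g u :=
      mul_nonneg hκ.le (rlIntegral_nonneg fun s hs => hg0 s hs.1)
    exact integrableOn_of_le_add_mul_rlIntegral (hf u hu) (by linarith [hgsup u hu])
  set h := fun s => max (f s - g s) 0
  have hh : ∀ u > 0, h u ≤ κ * rlIntegral ρ h u := by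
    intro u hu
    have hRHS : 0 ≤ κ * rlIntegral ρ h u :=
      mul_nonneg hκ.le (rlIntegral_nonneg fun s _ => le_max_right _ _)
    refine max_le ?_ hRHS
    rcases le_or_gt (f u) (g u) with hle | hlt
    · linarith
    · exact sub_le_mul_rlIntegral_max hκ.le (hKf u hu hlt) (hKg u) (hf u hu) (hgsup u hu)
  refine le_of_not_gt fun hlt => ?_
  have hint : IntegrableOn h (Ioc 0 t) :=
    ((integrableOn_Ioc_of_integrableOn_rpow_kernel_mul hloc ht (hKf t ht hlt)).sub
      (hg.integrableOn_Icc.mono_set Ioc_subset_Icc_self)).pos_part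
  have hzero : h =ᵐ[volume.restrict (Ioc 0 t)] 0 :=
    ae_eq_zero_of_le_mul_rlIntegral hρ hκ (fun s _ => le_max_right _ _) hint
      fun u hu => hh u hu.1
  have hKh : rlIntegral ρ h t = 0 := by
    refine integral_eq_zero_of_ae ?_
    filter_upwards [ae_restrict_of_ae_restrict_of_subset Ioo_subset_Ioc_self hzero] with s hs
    rw [hs, Pi.zero_apply, mul_zero]
  have := hh t ht
  rw [hKh, mul_zero] at this
  exact (sub_pos.2 hlt).not_ge ((le_max_left _ _).trans this)

end FractionalGronwall

open FractionalGronwall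

/-- Fractional Gronwall inequality: if `ρ > 0`, `c₁ > 0`, then there are constants
`c₂, c₃ > 0` (depending only on `ρ` and `c₁`) such that for every `κ > 0` and every
nonnegative locally integrable `f` on `(0,∞)` satisfying
`f t ≤ c₁ + κ ∫₀ᵗ (t-s)^{ρ-1} f s ds` for all `t > 0`, we have
`f t ≤ c₂ exp(c₃ (Γ(ρ) κ)^{1/ρ} t)` for all `t > 0`. -/
theorem fractional_gronwall (ρ c₁ : ℝ) (hρ : 0 < ρ) (hc₁ : 0 < c₁) :
    ∃ c₂ > (0 : ℝ), ∃ c₃ > (0 : ℝ), ∀ κ > (0 : ℝ), ∀ f : ℝ → ℝ,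
      (∀ t > (0 : ℝ), 0 ≤ f t) →
      LocallyIntegrableOn f (Set.Ioi 0) →
      (∀ t > (0 : ℝ), f t ≤ c₁ + κ * ∫ s in Set.Ioo 0 t, (t - s) ^ (ρ - 1) * f s) →
      ∀ t > (0 : ℝ), f t ≤ c₂ * Real.exp (c₃ * (Real.Gamma ρ * κ) ^ (1 / ρ) * t) := by
  refine ⟨2 * c₁, by positivity, 2 ^ (1 / ρ), by positivity, fun κ hκ f _ hloc hineq t ht => ?_⟩
  have hrate : 2 ^ (1 / ρ) * (Gamma ρ * κ) ^ (1 / ρ) = gronwallRate ρ κ := by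
    have := Gamma_pos_of_pos hρ
    rw [gronwallRate, ← mul_rpow zero_le_two (by positivity), mul_assoc]
  rw [hrate]
  exact le_of_le_add_mul_rlIntegral hρ hκ hloc (by fun_prop) (fun s _ => by positivity) hineq
    (fun u hu => add_mul_rlIntegral_two_mul_exp_le hρ hκ hc₁.le hu.le) ht
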